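/- arXiv:math/0406365 — 2 statements merged into one kernel-verified Lean document; each statement's English description precedes it below -/
import Mathlib

section
/- Let J be a Lie ideal of the cover L* contained in the multiplicator M. Then the quotient L*/J is an immediate descendant of L — that is, writing c' for the nilpotency class of K := L*/J, one has K/γ_{c'}(K) ≅ L — if and only if J ≠ M and J + N = M, where N is the nucleus of L*. -/
/-- The canonical projection `L → L ⧸ I` as a morphism of Lie algebras. -/
def LieIdeal.quotientMk {R : Type*} {L : Type*} [CommRing R] [LieRing L] [LieAlgebra R L]
    (I : LieIdeal R L) : L →ₗ⁅R⁆ L ⧸ I :=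
  { I.toSubmodule.mkQ with
    map_lie' := fun {x y} => (LieSubmodule.Quotient.mk_bracket I x y) }

/-- The cover `L* = F_d ⧸ ⁅I, F_d⁆` of a nilpotent Lie algebra `L ≅ F_d ⧸ I`,
where `F_d` is the free Lie algebra on `d` generators. -/
abbrev LieCover (F : Type u) [Field F] (d : ℕ)
    (I : LieIdeal F (FreeLieAlgebra F (Fin d))) :=
  FreeLieAlgebra F (Fin d) ⧸ ⁅I, (⊤ : LieIdeal F (FreeLieAlgebra F (Fin d)))⁆

/-- The multiplicator `M = I ⧸ ⁅I, F_d⁆`, an ideal of the cover `L*`. -/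
noncomputable abbrev lieMultiplicator (F : Type u) [Field F] (d : ℕ)
    (I : LieIdeal F (FreeLieAlgebra F (Fin d))) : LieIdeal F (LieCover F d I) :=
  LieIdeal.map (LieIdeal.quotientMk ⁅I, (⊤ : LieIdeal F (FreeLieAlgebra F (Fin d)))⁆) I

section Aux
variable {R : Type*} [CommRing R] {A : Type*} {B : Type*}
  [LieRing A] [LieAlgebra R A] [LieRing B] [LieAlgebra R B]

theorem LieIdeal.quotientMk_surjective (Q : LieIdeal R A) :
    Function.Surjective (LieIdeal.quotientMk Q) :=
  fun y => Quotient.inductionOn' y fun x => ⟨x, rfl⟩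

@[simp] theorem LieIdeal.ker_quotientMk (Q : LieIdeal R A) :
    (LieIdeal.quotientMk Q).ker = Q := by
  ext x
  rw [LieHom.mem_ker]
  exact LieSubmodule.Quotient.mk_eq_zero'

noncomputable def LieHom.quotKerEquivOfSurjective (g : A →ₗ⁅R⁆ B) (hg : Function.Surjective g) :
    (A ⧸ g.ker) ≃ₗ⁅R⁆ B :=
  g.quotKerEquivRange.trans <|
    (LieEquiv.ofEq _ _ (congrArg _ (g.range_eq_top.mpr hg))).trans LieSubalgebra.topEquiv

noncomputable def lieEquivOfKerEq (g : A →ₗ⁅R⁆ B) (hg : Function.Surjective g)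
    (Q : LieIdeal R A) (hk : g.ker = Q) : (A ⧸ Q) ≃ₗ⁅R⁆ B :=
  hk ▸ LieHom.quotKerEquivOfSurjective g hg

noncomputable def lieThirdIso (f : A →ₗ⁅R⁆ B) (hf : Function.Surjective f)
    (Q : LieIdeal R A) (hQ : f.ker ≤ Q) :
    (A ⧸ Q) ≃ₗ⁅R⁆ (B ⧸ LieIdeal.map f Q) :=
  let g : A →ₗ⁅R⁆ B ⧸ LieIdeal.map f Q := (LieIdeal.quotientMk _).comp f
  have hg : Function.Surjective g :=
    (LieIdeal.quotientMk_surjective _).comp hf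
  have hker : g.ker = Q := by
    ext x
    simp only [g, LieHom.mem_ker, LieHom.comp_apply]
    rw [← LieHom.mem_ker, LieIdeal.ker_quotientMk]
    constructor
    · intro hx
      obtain ⟨⟨q, hq⟩, hfq⟩ := LieIdeal.mem_map_of_surjective hf hx
      have hxq : x - q ∈ f.ker := by rw [LieHom.mem_ker, map_sub, hfq, sub_self]
      simpa using Q.add_mem (hQ hxq) hq
    · intro hx; exact LieIdeal.mem_map hx
  lieEquivOfKerEq g hg Q hker

theorem lcs_eq_bot_iff_of_equiv (e : A ≃ₗ⁅R⁆ B) (k : ℕ) :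
    (LieModule.lowerCentralSeries R A A k = ⊥) ↔ LieModule.lowerCentralSeries R B B k = ⊥ := by
  have hm := LieIdeal.lowerCentralSeries_map_eq (R := R) k (f := e.toLieHom) e.surjective
  rw [← hm, LieIdeal.map_eq_bot_iff, (LieHom.ker_eq_bot e.toLieHom).mpr e.injective, le_bot_iff]

end Aux

/-- For a Lie ideal `J` of the cover `L*` contained in the multiplicator `M`, the quotient
`K = L* ⧸ J` is an immediate descendant of `L` (i.e. `K ⧸ γ_{c'}(K) ≅ L` where `c'` is the
nilpotency class of `K`; in Mathlib's indexing `γ_{k+1}(K) = LieModule.lowerCentralSeries F K K k`)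
if and only if `J ≠ M` and `J + N = M`, where `N = γ_{c+1}(L*)` is the nucleus. -/
theorem quotient_isImmediateDescendant_iff
    (F : Type u) [Field F] (L : Type v) [LieRing L] [LieAlgebra F L]
    [FiniteDimensional F L] [LieRing.IsNilpotent L] (c : ℕ)
    (hc : LieModule.lowerCentralSeries F L L c = ⊥)
    (hc_min : ∀ k, LieModule.lowerCentralSeries F L L k = ⊥ → c ≤ k)
    (d : ℕ) (hd : d = Module.finrank F (L ⧸ LieAlgebra.derivedSeries F L 1))
    (I : LieIdeal F (FreeLieAlgebra F (Fin d)))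
    (e : (FreeLieAlgebra F (Fin d) ⧸ I) ≃ₗ⁅F⁆ L)
    (J : LieIdeal F (LieCover F d I)) (hJ : J ≤ lieMultiplicator F d I) :
    (∃ c' : ℕ, 0 < c' ∧
        LieModule.lowerCentralSeries F (LieCover F d I ⧸ J) (LieCover F d I ⧸ J) c' = ⊥ ∧
        (∀ k, LieModule.lowerCentralSeries F (LieCover F d I ⧸ J) (LieCover F d I ⧸ J) k = ⊥ →
          c' ≤ k) ∧
        Nonempty (((LieCover F d I ⧸ J) ⧸
          LieModule.lowerCentralSeries F (LieCover F d I ⧸ J) (LieCover F d I ⧸ J) (c' - 1))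
            ≃ₗ⁅F⁆ L)) ↔
      J ≠ lieMultiplicator F d I ∧
        J ⊔ LieModule.lowerCentralSeries F (LieCover F d I) (LieCover F d I) c =
          lieMultiplicator F d I := by
  classical
  set Cov := LieCover F d I
  set B : LieIdeal F (FreeLieAlgebra F (Fin d)) := ⁅I, (⊤ : LieIdeal F (FreeLieAlgebra F (Fin d)))⁆
    with hB
  set π : FreeLieAlgebra F (Fin d) →ₗ⁅F⁆ Cov := LieIdeal.quotientMk B with hπdef
  have hπ : Function.Surjective π := LieIdeal.quotientMk_surjective B
  have hπker : π.ker = B := LieIdeal.ker_quotientMk B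
  have hBI : B ≤ I := LieSubmodule.lie_le_left I ⊤
  set M : LieIdeal F Cov := lieMultiplicator F d I with hM
  have hMdef : M = LieIdeal.map π I := rfl
  have eM : (Cov ⧸ M) ≃ₗ⁅F⁆ L :=
    (lieThirdIso π hπ I (by rw [hπker]; exact hBI)).symm.trans e
  -- M is central
  have htop : LieIdeal.map π ⊤ = ⊤ := by
    rw [← π.idealRange_eq_map]; exact π.idealRange_eq_top_of_surjective hπ
  have hMcentral : ⁅(⊤ : LieIdeal F Cov), M⁆ = ⊥ := by
    have h1 : ⁅LieIdeal.map π I, LieIdeal.map π ⊤⁆ = ⊥ := by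
      rw [← LieIdeal.map_bracket_eq π hπ]
      exact LieIdeal.map_eq_bot_iff.mpr (by rw [hπker])
    rw [htop] at h1
    calc ⁅(⊤ : LieIdeal F Cov), M⁆ = ⁅M, ⊤⁆ := LieSubmodule.lie_comm ⊤ M
      _ = ⊥ := by rw [hMdef]; exact h1
  set N : LieIdeal F Cov := LieModule.lowerCentralSeries F Cov Cov c with hN
  have hNM : N ≤ M := by
    have h1 : LieModule.lowerCentralSeries F (Cov ⧸ M) (Cov ⧸ M) c = ⊥ :=
      (lcs_eq_bot_iff_of_equiv eM c).mpr hc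
    have h2 := LieIdeal.lowerCentralSeries_map_eq (R := F) c (LieIdeal.quotientMk_surjective M)
    rw [h1, LieIdeal.map_eq_bot_iff, LieIdeal.ker_quotientMk] at h2
    exact h2
  have hCovNil : LieModule.lowerCentralSeries F Cov Cov (c + 1) = ⊥ := by
    rw [eq_bot_iff, LieModule.lowerCentralSeries_succ]
    calc ⁅(⊤ : LieIdeal F Cov), N⁆ ≤ ⁅(⊤ : LieIdeal F Cov), M⁆ :=
          LieSubmodule.mono_lie_right _ hNM
      _ = ⊥ := hMcentral
  set ρ : Cov →ₗ⁅F⁆ Cov ⧸ J := LieIdeal.quotientMk J with hρdef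
  have hρ : Function.Surjective ρ := LieIdeal.quotientMk_surjective J
  have hρker : ρ.ker = J := LieIdeal.ker_quotientMk J
  have lcsK : ∀ k, LieIdeal.map ρ (LieModule.lowerCentralSeries F Cov Cov k) =
      LieModule.lowerCentralSeries F (Cov ⧸ J) (Cov ⧸ J) k :=
    fun k => LieIdeal.lowerCentralSeries_map_eq k hρ
  have hJbot : LieIdeal.map ρ J = ⊥ := LieIdeal.map_eq_bot_iff.mpr (by rw [hρker])
  have hQc : LieIdeal.map ρ (J ⊔ N) =
      LieModule.lowerCentralSeries F (Cov ⧸ J) (Cov ⧸ J) c := by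
    rw [LieIdeal.map_sup, hJbot, bot_sup_eq, lcsK c]
  have hKc1 : LieModule.lowerCentralSeries F (Cov ⧸ J) (Cov ⧸ J) (c + 1) = ⊥ := by
    rw [← lcsK (c + 1), hCovNil]
    exact LieIdeal.map_eq_bot_iff.mpr bot_le
  have ψ0 : (Cov ⧸ (J ⊔ N)) ≃ₗ⁅F⁆ ((Cov ⧸ J) ⧸ LieIdeal.map ρ (J ⊔ N)) :=
    lieThirdIso ρ hρ (J ⊔ N) (by rw [hρker]; exact le_sup_left)
  have ψ : (Cov ⧸ (J ⊔ N)) ≃ₗ⁅F⁆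
      ((Cov ⧸ J) ⧸ LieModule.lowerCentralSeries F (Cov ⧸ J) (Cov ⧸ J) c) := hQc ▸ ψ0
  constructor
  · rintro ⟨c', hc'0, hc'bot, hc'min, ⟨φ⟩⟩
    have hle : c' ≤ c + 1 := hc'min _ hKc1
    have hge : c + 1 ≤ c' := by
      by_contra h
      set Q := LieModule.lowerCentralSeries F (Cov ⧸ J) (Cov ⧸ J) (c' - 1) with hQ
      have hQbot : LieModule.lowerCentralSeries F ((Cov ⧸ J) ⧸ Q) ((Cov ⧸ J) ⧸ Q) (c' - 1) = ⊥ := by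
        rw [← LieIdeal.lowerCentralSeries_map_eq (c' - 1) (LieIdeal.quotientMk_surjective Q)]
        exact LieIdeal.map_eq_bot_iff.mpr (by rw [LieIdeal.ker_quotientMk])
      have hLbot : LieModule.lowerCentralSeries F L L (c' - 1) = ⊥ :=
        (lcs_eq_bot_iff_of_equiv φ (c' - 1)).mp hQbot
      have := hc_min _ hLbot
      omega
    have hc'eq : c' = c + 1 := le_antisymm hle hge
    subst hc'eq
    -- the equivalence χ : Cov ⧸ (J ⊔ N) ≃ L
    have χ : (Cov ⧸ (J ⊔ N)) ≃ₗ⁅F⁆ L := ψ.trans φ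
    have hJNM : J ⊔ N ≤ M := sup_le hJ hNM
    -- dimension argument
    set σ : Cov →ₗ⁅F⁆ Cov ⧸ (J ⊔ N) := LieIdeal.quotientMk (J ⊔ N) with hσdef
    have hσ : Function.Surjective σ := LieIdeal.quotientMk_surjective _
    set S : LieIdeal F (Cov ⧸ (J ⊔ N)) := LieIdeal.map σ M with hS
    have eS : (Cov ⧸ M) ≃ₗ⁅F⁆ ((Cov ⧸ (J ⊔ N)) ⧸ S) :=
      lieThirdIso σ hσ M (by rw [LieIdeal.ker_quotientMk]; exact hJNM)
    haveI : FiniteDimensional F (Cov ⧸ (J ⊔ N)) := Module.Finite.equiv χ.symm.toLinearEquiv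
    have hfr1 : Module.finrank F (Cov ⧸ (J ⊔ N)) = Module.finrank F L :=
      χ.toLinearEquiv.finrank_eq
    have hfr2 : Module.finrank F ((Cov ⧸ (J ⊔ N)) ⧸ S) = Module.finrank F L :=
      (eS.symm.trans eM).toLinearEquiv.finrank_eq
    have hadd := Submodule.finrank_quotient_add_finrank (S.toSubmodule)
    have hfrS : Module.finrank F S.toSubmodule = 0 := by
      have : Module.finrank F ((Cov ⧸ (J ⊔ N)) ⧸ S.toSubmodule) =
          Module.finrank F ((Cov ⧸ (J ⊔ N)) ⧸ S) := rfl
      omega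
    have hSbot : S = ⊥ := by
      rw [← LieSubmodule.toSubmodule_inj, LieSubmodule.bot_toSubmodule]
      exact Submodule.finrank_eq_zero.mp hfrS
    have hMle : M ≤ J ⊔ N := by
      rw [hS] at hSbot
      rw [LieIdeal.map_eq_bot_iff, LieIdeal.ker_quotientMk] at hSbot
      exact hSbot
    refine ⟨?_, le_antisymm hJNM hMle ▸ rfl⟩
    · intro hJM
      have eK : (Cov ⧸ J) ≃ₗ⁅F⁆ L := by rw [hJM]; exact eM
      have hKbot : LieModule.lowerCentralSeries F (Cov ⧸ J) (Cov ⧸ J) c = ⊥ :=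
        (lcs_eq_bot_iff_of_equiv eK c).mpr hc
      have := hc'min c hKbot
      omega
  · rintro ⟨hne, hsup⟩
    refine ⟨c + 1, Nat.succ_pos _, hKc1, ?_, ?_⟩
    · intro k hk
      by_contra h
      have hkc : k ≤ c := by omega
      have hcbot : LieModule.lowerCentralSeries F (Cov ⧸ J) (Cov ⧸ J) c = ⊥ :=
        le_bot_iff.mp (hk ▸ LieModule.antitone_lowerCentralSeries F (Cov ⧸ J) (Cov ⧸ J) hkc)
      rw [← lcsK c, LieIdeal.map_eq_bot_iff, hρker] at hcbot
      exact hne (by rw [← hsup, sup_eq_left.mpr hcbot])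
    · refine ⟨ψ.symm.trans ?_⟩
      rw [hsup]
      exact eM
end

section
/- There is a group homomorphism ρ from the automorphism group of L to the group of invertible linear maps of the multiplicator M such that for every automorphism α of L and every automorphism α* of L* satisfying ψ ∘ α* = α ∘ ψ, the automorphism α* maps M onto M and its restriction to M equals ρ(α); in particular, the restriction to M of any lift of α depends only on α. -/
universe u v

theorem LieIdeal.quotientMk_surjective_s16 {R : Type*} {L : Type*} [CommRing R] [LieRing L]
    [LieAlgebra R L] (I : LieIdeal R L) : Function.Surjective (LieIdeal.quotientMk I) :=
  Submodule.mkQ_surjective _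

/-- Lift a Lie hom through a quotient. -/
def LieIdeal.quotLift {R L L' : Type*} [CommRing R] [LieRing L] [LieAlgebra R L]
    [LieRing L'] [LieAlgebra R L'] (J : LieIdeal R L) (f : L →ₗ⁅R⁆ L')
    (h : ∀ x ∈ J, f x = 0) : (L ⧸ J) →ₗ⁅R⁆ L' :=
  { J.toSubmodule.liftQ f.toLinearMap (fun x hx => by
      rw [LinearMap.mem_ker]; exact h x hx) with
    map_lie' := by
      intro x y
      obtain ⟨a, rfl⟩ := J.quotientMk_surjective_s16 x
      obtain ⟨b, rfl⟩ := J.quotientMk_surjective_s16 y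
      have : ∀ z : L, J.toSubmodule.liftQ f.toLinearMap (fun x hx => by
          rw [LinearMap.mem_ker]; exact h x hx) (LieIdeal.quotientMk J z) = f z := fun z =>
        Submodule.liftQ_apply _ _ _
      rw [← LieHom.map_lie (LieIdeal.quotientMk J) a b]
      simp only [LinearMap.toFun_eq_coe, this]
      exact LieHom.map_lie f a b }

theorem LieIdeal.quotLift_mk {R L L' : Type*} [CommRing R] [LieRing L] [LieAlgebra R L]
    [LieRing L'] [LieAlgebra R L'] (J : LieIdeal R L) (f : L →ₗ⁅R⁆ L')
    (h : ∀ x ∈ J, f x = 0) (x : L) :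
    LieIdeal.quotLift J f h (LieIdeal.quotientMk J x) = f x :=
  Submodule.liftQ_apply _ _ _

section AuxMult

variable (F : Type u) [Field F] (d : ℕ) (I : LieIdeal F (FreeLieAlgebra F (Fin d)))

theorem mem_lieMultiplicator {x : LieCover F d I} :
    x ∈ lieMultiplicator F d I ↔ ∃ a ∈ I,
      LieIdeal.quotientMk ⁅I, (⊤ : LieIdeal F (FreeLieAlgebra F (Fin d)))⁆ a = x := by
  have h := LieIdeal.coe_map_of_surjective
    (f := LieIdeal.quotientMk ⁅I, (⊤ : LieIdeal F (FreeLieAlgebra F (Fin d)))⁆)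
    (I := I) (LieIdeal.quotientMk_surjective_s16 _)
  rw [← LieSubmodule.mem_toSubmodule, h, Submodule.mem_map]
  constructor
  · rintro ⟨a, ha, rfl⟩; exact ⟨a, ha, rfl⟩
  · rintro ⟨a, ha, rfl⟩; exact ⟨a, ha, rfl⟩

theorem multiplicator_central {m : LieCover F d I} (hm : m ∈ lieMultiplicator F d I)
    (x : LieCover F d I) : ⁅m, x⁆ = 0 := by
  obtain ⟨a, ha, rfl⟩ := (mem_lieMultiplicator F d I).mp hm
  obtain ⟨b, rfl⟩ := LieIdeal.quotientMk_surjective_s16 _ x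
  rw [← LieHom.map_lie]
  exact (Submodule.Quotient.mk_eq_zero _).mpr
    (LieSubmodule.lie_mem_lie ha (LieSubmodule.mem_top b))

theorem multiplicator_central' {m : LieCover F d I} (hm : m ∈ lieMultiplicator F d I)
    (x : LieCover F d I) : ⁅x, m⁆ = 0 := by
  rw [← lie_skew, multiplicator_central F d I hm x, neg_zero]

end AuxMult

/-- The quotient by the derived ideal is abelian. -/
theorem quot_derived_abelian {F : Type u} [Field F] {L : Type v} [LieRing L] [LieAlgebra F L]
    (u v : L ⧸ LieAlgebra.derivedSeries F L 1) : ⁅u, v⁆ = 0 := by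
  obtain ⟨a, rfl⟩ := (LieAlgebra.derivedSeries F L 1).quotientMk_surjective_s16 u
  obtain ⟨b, rfl⟩ := (LieAlgebra.derivedSeries F L 1).quotientMk_surjective_s16 v
  rw [← LieHom.map_lie]
  refine (Submodule.Quotient.mk_eq_zero _).mpr ?_
  show ⁅a, b⁆ ∈ LieAlgebra.derivedSeries F L 1
  rw [LieAlgebra.derivedSeries_def, LieAlgebra.derivedSeriesOfIdeal_succ,
    LieAlgebra.derivedSeriesOfIdeal_zero]
  exact LieSubmodule.lie_mem_lie (LieSubmodule.mem_top a) (LieSubmodule.mem_top b)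

/-- A Lie hom into an abelian Lie algebra kills the derived ideal. -/
theorem derived_le_ker {F : Type u} [Field F] {L : Type v} {L' : Type w} [LieRing L]
    [LieAlgebra F L] [LieRing L'] [LieAlgebra F L'] (f : L →ₗ⁅F⁆ L')
    (habel : ∀ u v : L', ⁅u, v⁆ = 0) {x : L}
    (hx : x ∈ LieAlgebra.derivedSeries F L 1) : f x = 0 := by
  have h1 : LieAlgebra.derivedSeries F L' 1 = ⊥ := by
    rw [LieAlgebra.derivedSeries_def, LieAlgebra.derivedSeriesOfIdeal_succ,
      LieAlgebra.derivedSeriesOfIdeal_zero]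
    rw [eq_bot_iff, ← LieSubmodule.toSubmodule_le_toSubmodule,
      LieSubmodule.lieIdeal_oper_eq_linear_span]
    refine Submodule.span_le.mpr ?_
    rintro - ⟨a, b, rfl⟩
    simp [habel]
  have h2 := LieIdeal.derivedSeries_map_le (f := f) 1
  rw [h1, le_bot_iff, LieIdeal.map_eq_bot_iff] at h2
  exact (LieHom.mem_ker).mp (h2 hx)

open Module in
/-- Since `d = dim L/[L,L]`, the kernel `I` of `F_d → L` lies in the derived ideal. -/
theorem I_le_derived (F : Type u) [Field F] (L : Type v) [LieRing L] [LieAlgebra F L]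
    [FiniteDimensional F L] (d : ℕ)
    (hd : d = Module.finrank F (L ⧸ LieAlgebra.derivedSeries F L 1))
    (I : LieIdeal F (FreeLieAlgebra F (Fin d)))
    (e : (FreeLieAlgebra F (Fin d) ⧸ I) ≃ₗ⁅F⁆ L) :
    I ≤ LieAlgebra.derivedSeries F (FreeLieAlgebra F (Fin d)) 1 := by
  set Fd := FreeLieAlgebra F (Fin d) with hFd
  set D : LieIdeal F Fd := LieAlgebra.derivedSeries F Fd 1 with hD
  set mkD : Fd →ₗ⁅F⁆ (Fd ⧸ D) := LieIdeal.quotientMk D with hmkD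
  -- the quotient Fd ⧸ D is spanned by the images of the generators
  have habel : ∀ u v : Fd ⧸ D, ⁅u, v⁆ = 0 := quot_derived_abelian
  set S : Submodule F (Fd ⧸ D) :=
    Submodule.span F (Set.range fun i => mkD (FreeLieAlgebra.of F i)) with hS
  have hStop : S = ⊤ := by
    set SA : LieSubalgebra F (Fd ⧸ D) :=
      { S with lie_mem' := fun {x y} _ _ => by rw [habel x y]; exact S.zero_mem } with hSA
    set h : Fd →ₗ⁅F⁆ SA := FreeLieAlgebra.lift F
      (fun i => (⟨mkD (FreeLieAlgebra.of F i),
        Submodule.subset_span ⟨i, rfl⟩⟩ : SA)) with hh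
    have key : SA.incl.comp h = mkD := by
      apply FreeLieAlgebra.hom_ext
      intro i
      simp [hh, FreeLieAlgebra.lift_of_apply, LieSubalgebra.coe_incl]
    rw [eq_top_iff]
    intro x _
    obtain ⟨a, rfl⟩ := D.quotientMk_surjective_s16 x
    have : SA.incl (h a) = mkD a := by rw [← key]; rfl
    rw [← this]
    exact (h a).2
  -- hence it is finite dimensional of dimension at most d
  set τ : (Fin d → F) →ₗ[F] (Fd ⧸ D) :=
    (Pi.basisFun F (Fin d)).constr F (fun i => mkD (FreeLieAlgebra.of F i)) with hτ
  have hτr : LinearMap.range τ = ⊤ := by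
    rw [hτ, Basis.constr_range, ← hS, hStop]
  have : Module.Finite F (Fd ⧸ D) :=
    Module.Finite.of_surjective τ (LinearMap.range_eq_top.mp hτr)
  have hQle : finrank F (Fd ⧸ D) ≤ d := by
    have h1 := LinearMap.finrank_range_le τ
    rw [hτr, finrank_top] at h1
    simpa using h1
  -- the induced map to L ⧸ L' is injective
  set π : Fd →ₗ⁅F⁆ (L ⧸ LieAlgebra.derivedSeries F L 1) :=
    (LieIdeal.quotientMk (LieAlgebra.derivedSeries F L 1)).comp
      (e.toLieHom.comp (LieIdeal.quotientMk I)) with hπ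
  have hπsurj : Function.Surjective π := by
    intro y
    obtain ⟨z, rfl⟩ := (LieAlgebra.derivedSeries F L 1).quotientMk_surjective_s16 y
    obtain ⟨w, hw⟩ := e.surjective z
    obtain ⟨a, rfl⟩ := I.quotientMk_surjective_s16 w
    exact ⟨a, by rw [← hw]; rfl⟩
  have hπD : ∀ x ∈ D, π x = 0 := fun x hx => derived_le_ker π quot_derived_abelian hx
  set T : (Fd ⧸ D) →ₗ[F] (L ⧸ LieAlgebra.derivedSeries F L 1) :=
    D.toSubmodule.liftQ π.toLinearMap (fun x hx => by
      rw [LinearMap.mem_ker]; exact hπD x hx) with hT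
  have hTmk : ∀ x : Fd, T (mkD x) = π x := fun x => Submodule.liftQ_apply _ _ _
  have hTsurj : LinearMap.range T = ⊤ := by
    rw [LinearMap.range_eq_top]
    intro y
    obtain ⟨x, hx⟩ := hπsurj y
    exact ⟨mkD x, by rw [hTmk, hx]⟩
  have hker : LinearMap.ker T = ⊥ := by
    have hrn := LinearMap.finrank_range_add_finrank_ker T
    rw [hTsurj, finrank_top] at hrn
    have : finrank F (LinearMap.ker T) = 0 := by omega
    exact Submodule.finrank_eq_zero.mp this
  -- conclude
  intro a ha
  have hπa : π a = 0 := by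
    have : LieIdeal.quotientMk I a = 0 := (Submodule.Quotient.mk_eq_zero _).mpr ha
    simp [hπ, this]
  have : T (mkD a) = 0 := by rw [hTmk, hπa]
  have : mkD a = 0 := by
    rw [← LinearMap.mem_ker, hker] at this; simpa using this
  exact (Submodule.Quotient.mk_eq_zero _).mp this

/-- There is a group homomorphism `ρ` from the automorphism group of `L` (with `trans` as
composition) to the group of invertible `F`-linear maps of the multiplicator `M` such that,
for every automorphism `α` of `L` and every lift `α*` of `α` to the cover `L*`
(i.e. `ψ ∘ α* = α ∘ ψ`), the lift `α*` maps `M` onto `M` and restricts on `M` to `ρ α`.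
In particular the restriction of a lift to `M` depends only on `α`. -/
theorem exists_restriction_hom_of_lifts
    (F : Type u) [Field F] (L : Type v) [LieRing L] [LieAlgebra F L]
    [FiniteDimensional F L] [LieRing.IsNilpotent L]
    (d : ℕ) (hd : d = Module.finrank F (L ⧸ LieAlgebra.derivedSeries F L 1))
    (I : LieIdeal F (FreeLieAlgebra F (Fin d)))
    (e : (FreeLieAlgebra F (Fin d) ⧸ I) ≃ₗ⁅F⁆ L)
    (ψ : LieCover F d I →ₗ⁅F⁆ L) (hψ : Function.Surjective ψ)
    (hker : ψ.ker = lieMultiplicator F d I) :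
    ∃ ρ : (L ≃ₗ⁅F⁆ L) →
        (↥(lieMultiplicator F d I) ≃ₗ[F] ↥(lieMultiplicator F d I)),
      (∀ α β : L ≃ₗ⁅F⁆ L, ρ (α.trans β) = (ρ α).trans (ρ β)) ∧
      ∀ (α : L ≃ₗ⁅F⁆ L) (αs : LieCover F d I ≃ₗ⁅F⁆ LieCover F d I),
        (∀ x, ψ (αs x) = α (ψ x)) →
          LieIdeal.map αs.toLieHom (lieMultiplicator F d I) = lieMultiplicator F d I ∧
          ∀ m : ↥(lieMultiplicator F d I), ((ρ α m : ↥(lieMultiplicator F d I)) :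
            LieCover F d I) = αs (m : LieCover F d I) := by
  classical
  set Fd := FreeLieAlgebra F (Fin d) with hFd
  set J : LieIdeal F Fd := ⁅I, (⊤ : LieIdeal F Fd)⁆ with hJ
  set q : Fd →ₗ⁅F⁆ LieCover F d I := LieIdeal.quotientMk J with hq
  set M : LieIdeal F (LieCover F d I) := lieMultiplicator F d I with hM
  -- membership in M via kernel of ψ
  have hmemM : ∀ x : LieCover F d I, x ∈ M ↔ ψ x = 0 := by
    intro x
    show x ∈ M ↔ _
    rw [← hker, LieHom.mem_ker]
  -- M is contained in the derived ideal of the cover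
  have hMder : ∀ m ∈ M, m ∈ LieAlgebra.derivedSeries F (LieCover F d I) 1 := by
    intro m hm
    obtain ⟨a, ha, rfl⟩ := (mem_lieMultiplicator F d I).mp hm
    have h1 : a ∈ LieAlgebra.derivedSeries F Fd 1 := I_le_derived F L d hd I e ha
    have h2 := LieIdeal.derivedSeries_map_le (f := q) 1
    exact h2 (LieIdeal.mem_map h1)
  -- uniqueness on M: two Lie endos of the cover inducing the same map on L agree on M
  have hU : ∀ f g : LieCover F d I →ₗ⁅F⁆ LieCover F d I,
      (∀ x, ψ (f x) = ψ (g x)) → ∀ m ∈ M, f m = g m := by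
    intro f g hfg m hm
    have hder := hMder m hm
    rw [LieAlgebra.derivedSeries_def, LieAlgebra.derivedSeriesOfIdeal_succ,
      LieAlgebra.derivedSeriesOfIdeal_zero, ← LieSubmodule.mem_toSubmodule,
      LieSubmodule.lieIdeal_oper_eq_linear_span] at hder
    refine Submodule.span_induction ?_ ?_ ?_ ?_ hder
    · rintro - ⟨x, y, rfl⟩
      have hx : f x - g x ∈ M := by
        rw [hmemM, map_sub, hfg, sub_self]
      have hy : f y - g y ∈ M := by
        rw [hmemM, map_sub, hfg, sub_self]
      rw [LieHom.map_lie, LieHom.map_lie]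
      calc ⁅f x, f y⁆ = ⁅g x + (f x - g x), f y⁆ := by
            rw [show g x + (f x - g x) = f x by abel]
        _ = ⁅g x, f y⁆ := by
            rw [add_lie, multiplicator_central F d I hx, add_zero]
        _ = ⁅g x, g y + (f y - g y)⁆ := by
            rw [show g y + (f y - g y) = f y by abel]
        _ = ⁅g x, g y⁆ := by
            rw [lie_add, multiplicator_central' F d I hy, add_zero]
    · simp
    · intro a b _ _ ha hb
      rw [map_add, map_add, ha, hb]
    · intro t a _ ha
      rw [map_smul, map_smul, ha]
  -- any lift sends M into M
  have hpres : ∀ (α : L ≃ₗ⁅F⁆ L) (f : LieCover F d I →ₗ⁅F⁆ LieCover F d I),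
      (∀ x, ψ (f x) = α (ψ x)) → ∀ m ∈ M, f m ∈ M := by
    intro α f hf m hm
    rw [hmemM, hf, (hmemM m).mp hm]
    exact α.toLieHom.map_zero
  -- every automorphism of L admits a lift to the cover
  have hexists : ∀ α : L ≃ₗ⁅F⁆ L, ∃ f : LieCover F d I →ₗ⁅F⁆ LieCover F d I,
      ∀ x, ψ (f x) = α (ψ x) := by
    intro α
    set z : Fin d → LieCover F d I :=
      fun i => Function.surjInv hψ (α (ψ (q (FreeLieAlgebra.of F i)))) with hz
    set θ : Fd →ₗ⁅F⁆ LieCover F d I := FreeLieAlgebra.lift F z with hθ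
    have hcomm : ∀ x : Fd, ψ (θ x) = α (ψ (q x)) := by
      have : ψ.comp θ = (α.toLieHom.comp ψ).comp q := by
        apply FreeLieAlgebra.hom_ext
        intro i
        simp only [LieHom.comp_apply, hθ, FreeLieAlgebra.lift_of_apply, hz]
        rw [Function.surjInv_eq hψ]
        rfl
      intro x
      have := congrArg (fun f => f x) (congrArg (fun f => f.toLinearMap) this)
      simpa using this
    have hθI : ∀ a ∈ I, θ a ∈ M := by
      intro a ha
      rw [hmemM, hcomm]
      have : q a ∈ M := LieIdeal.mem_map ha
      rw [(hmemM _).mp this]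
      exact α.toLieHom.map_zero
    have hθkill : ∀ x ∈ J, θ x = 0 := by
      intro x hx
      rw [← LieSubmodule.mem_toSubmodule, LieSubmodule.lieIdeal_oper_eq_linear_span] at hx
      refine Submodule.span_induction ?_ ?_ ?_ ?_ hx
      · rintro - ⟨a, b, rfl⟩
        rw [LieHom.map_lie]
        exact multiplicator_central F d I (hθI a a.2) _
      · simp
      · intro u w _ _ hu hw; rw [map_add, hu, hw, add_zero]
      · intro t u _ hu; rw [map_smul, hu, smul_zero]
    refine ⟨LieIdeal.quotLift J θ hθkill, ?_⟩
    intro x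
    obtain ⟨a, rfl⟩ := J.quotientMk_surjective_s16 x
    rw [show (LieIdeal.quotientMk J : Fd → LieCover F d I) a = q a from rfl]
    rw [show LieIdeal.quotLift J θ hθkill (q a) = θ a from LieIdeal.quotLift_mk J θ hθkill a]
    exact hcomm a
  -- choose a lift for each automorphism
  set f0 : (L ≃ₗ⁅F⁆ L) → (LieCover F d I →ₗ⁅F⁆ LieCover F d I) :=
    fun α => (hexists α).choose with hf0def
  have hf0 : ∀ (α : L ≃ₗ⁅F⁆ L) (x : LieCover F d I), ψ (f0 α x) = α (ψ x) :=
    fun α => (hexists α).choose_spec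
  -- the restriction of the chosen lift to M
  set r : (L ≃ₗ⁅F⁆ L) → (↥M →ₗ[F] ↥M) := fun α =>
    { toFun := fun m => ⟨f0 α m, hpres α (f0 α) (hf0 α) m m.2⟩
      map_add' := fun m n => by
        ext
        show f0 α (↑m + ↑n) = f0 α ↑m + f0 α ↑n
        rw [map_add]
      map_smul' := fun t m => by
        ext
        show f0 α (t • (↑m : LieCover F d I)) = t • f0 α ↑m
        rw [map_smul] } with hrdef
  have hr : ∀ (α : L ≃ₗ⁅F⁆ L) (m : ↥M), ((r α m : ↥M) : LieCover F d I) = f0 α m :=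
    fun α m => rfl
  -- composition of lifts is a lift of the composition
  have hcomplift : ∀ (α β : L ≃ₗ⁅F⁆ L) (x : LieCover F d I),
      ψ ((f0 β).comp (f0 α) x) = (α.trans β) (ψ x) := by
    intro α β x
    rw [LieHom.comp_apply, hf0, hf0]
    rfl
  have hrcomp : ∀ α β : L ≃ₗ⁅F⁆ L, (r β).comp (r α) = r (α.trans β) := by
    intro α β
    apply LinearMap.ext
    intro m
    apply Subtype.ext
    show f0 β (f0 α m) = f0 (α.trans β) m
    exact hU ((f0 β).comp (f0 α)) (f0 (α.trans β))
      (fun x => by rw [hcomplift, hf0]) m m.2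
  have hrid : ∀ (α : L ≃ₗ⁅F⁆ L) (m : ↥M), (r α.symm) ((r α) m) = m := by
    intro α m
    apply Subtype.ext
    show f0 α.symm (f0 α m) = (m : LieCover F d I)
    refine hU ((f0 α.symm).comp (f0 α)) (LieHom.id) ?_ m m.2
    intro x
    rw [LieHom.comp_apply, hf0, hf0]
    show α.symm (α (ψ x)) = ψ (LieHom.id x)
    rw [α.symm_apply_apply]
    rfl
  have hrid' : ∀ (α : L ≃ₗ⁅F⁆ L) (m : ↥M), (r α) ((r α.symm) m) = m := by
    intro α m
    have := hrid α.symm m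
    simpa using this
  -- assemble the linear equivalences
  set ρ : (L ≃ₗ⁅F⁆ L) → (↥M ≃ₗ[F] ↥M) := fun α =>
    LinearEquiv.ofLinear (r α) (r α.symm)
      (LinearMap.ext fun m => hrid' α m)
      (LinearMap.ext fun m => hrid α m) with hρdef
  have hρ : ∀ (α : L ≃ₗ⁅F⁆ L) (m : ↥M), ((ρ α m : ↥M) : LieCover F d I) = f0 α m :=
    fun α m => rfl
  refine ⟨ρ, ?_, ?_⟩
  · intro α β
    apply LinearEquiv.toLinearMap_injective
    apply LinearMap.ext
    intro m
    apply Subtype.ext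
    show ((ρ (α.trans β) m : ↥M) : LieCover F d I) = ((ρ β (ρ α m) : ↥M) : LieCover F d I)
    rw [hρ, hρ, hρ]
    have := congrArg (fun f => ((f m : ↥M) : LieCover F d I)) (hrcomp α β)
    simpa [hr] using this.symm
  · intro α αs hαs
    have hsymm : ∀ y, ψ (αs.symm y) = α.symm (ψ y) := by
      intro y
      have := hαs (αs.symm y)
      rw [αs.apply_symm_apply] at this
      rw [this, α.symm_apply_apply]
    constructor
    · apply le_antisymm
      · rw [LieIdeal.map_le_iff_le_comap]
        intro m hm
        exact hpres α αs.toLieHom hαs m hm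
      · intro m hm
        have h1 : αs.symm m ∈ M := hpres α.symm αs.symm.toLieHom hsymm m hm
        have h2 : αs.toLieHom (αs.symm m) = m := αs.apply_symm_apply m
        rw [← h2]
        exact LieIdeal.mem_map h1
    · intro m
      rw [hρ]
      exact hU (f0 α) αs.toLieHom (fun x => by rw [hf0]; exact (hαs x).symm) m m.2
end
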